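/- arXiv:1110.3724 — 2 statements merged into one kernel-verified Lean document; each statement's English description precedes it below -/
import Mathlib

section
/- For integers i and j with 0 ≤ j ≤ i-1, the polynomial A(i,j,t) satisfies the reciprocity t^{i+1} A(i, j, 1/t) = A(i, i-1-j, t). -/
/-- `A(i,j,t) = (1-t)^{i+2} ∑_{n≥0} t^n n^{j+1} (n+1)^{i-j}` for `i ≥ j ≥ 0`,
as a formal power series. -/
noncomputable def Apoly (i j : ℕ) : PowerSeries ℤ :=
  (1 - PowerSeries.X) ^ (i + 2) *
    PowerSeries.mk (fun n : ℕ => (n : ℤ) ^ (j + 1) * ((n : ℤ) + 1) ^ (i - j))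

/-!
For a polynomial `P` of degree `< N`, the `k`-th coefficient of `(1 - t)^N ∑ P(n) tⁿ` is the
truncated alternating sum `∑_{m ≤ k} (-1)^m C(N,m) P(k - m)`. For `k ≥ N` it is a full `N`-th
difference of `P`, hence zero, so the series is a polynomial of degree `< N`. For `k < N` the
full difference still vanishes, so the truncated sum is minus the complementary one, which only
sees `P` at the negative integers `-1 - e`. The substitution `n ↦ -1 - n` turns
`n^{j+1} (n+1)^{i-j}` into `±n^{i-j} (n+1)^{j+1}`, which exchanges `j` and `i - 1 - j`.
-/

section NumeratorSeries

open Finset PowerSeries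

variable {R : Type*} [CommRing R]

theorem PowerSeries.coeff_one_sub_X_pow (N m : ℕ) :
    coeff m ((1 - X : PowerSeries R) ^ N) = (-1) ^ m * N.choose m := by
  have : (1 - X : PowerSeries R) ^ N = rescale (-1) ↑((1 + Polynomial.X : Polynomial R) ^ N) := by
    simp [Polynomial.coe_pow, sub_eq_add_neg]
  rw [this, coeff_rescale, Polynomial.coeff_coe, Polynomial.coeff_one_add_X_pow]

theorem Polynomial.sum_neg_one_pow_mul_choose_mul_eval_sub_eq_zero {P : Polynomial R} {N : ℕ}
    (hP : P.natDegree < N) (x : R) :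
    ∑ m ∈ range (N + 1), (-1) ^ m * N.choose m * P.eval (x - m) = 0 := by
  have h := congr_fun (Polynomial.fwdDiff_iter_eq_zero_of_degree_lt hP) (x - N)
  rw [fwdDiff_iter_eq_sum_shift, Pi.zero_apply, ← sum_range_reflect] at h
  rw [← h]
  refine sum_congr rfl fun m hm => ?_
  have hm : m ≤ N := Nat.lt_succ_iff.mp (mem_range.mp hm)
  rw [Nat.add_sub_cancel, Nat.sub_sub_self hm, Nat.choose_symm hm, zsmul_eq_mul, nsmul_one]
  push_cast [hm]
  ring_nf

/-- The numerator `h` in `∑ₙ P(n) Xⁿ = h / (1 - X)^N`. -/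
noncomputable def numeratorSeries (N : ℕ) (P : Polynomial R) : PowerSeries R :=
  (1 - X) ^ N * PowerSeries.mk fun n => P.eval (n : R)

theorem coeff_numeratorSeries (N k : ℕ) (P : Polynomial R) :
    coeff k (numeratorSeries N P) =
      ∑ m ∈ range (k + 1), (-1) ^ m * N.choose m * P.eval ((k : R) - m) := by
  rw [numeratorSeries, coeff_mul, Nat.sum_antidiagonal_eq_sum_range_succ fun a b =>
    coeff a ((1 - X : PowerSeries R) ^ N) * coeff b (PowerSeries.mk fun n => P.eval (n : R))]
  refine sum_congr rfl fun m hm => ?_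
  rw [coeff_one_sub_X_pow, coeff_mk, Nat.cast_sub (Nat.lt_succ_iff.mp (mem_range.mp hm))]

theorem coeff_numeratorSeries_eq_zero {N k : ℕ} {P : Polynomial R} (hP : P.natDegree < N)
    (hk : N ≤ k) : coeff k (numeratorSeries N P) = 0 := by
  rw [coeff_numeratorSeries, ← P.sum_neg_one_pow_mul_choose_mul_eval_sub_eq_zero hP k]
  refine (sum_subset (range_subset_range.mpr (by omega)) fun m _ hm => ?_).symm
  rw [Nat.choose_eq_zero_of_lt (by simpa using hm), Nat.cast_zero, mul_zero, zero_mul]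

theorem coe_trunc_numeratorSeries {N : ℕ} {P : Polynomial R} (hP : P.natDegree < N) :
    (trunc N (numeratorSeries N P) : PowerSeries R) = numeratorSeries N P := by
  ext k
  rw [Polynomial.coeff_coe, coeff_trunc]
  split_ifs with hk
  · rfl
  · exact (coeff_numeratorSeries_eq_zero hP (not_lt.mp hk)).symm

theorem coeff_numeratorSeries_eq_coeff_sub {N k : ℕ} {P Q : Polynomial R}
    (hP : P.natDegree ≤ N) (hPQ : ∀ x, P.eval (-1 - x) = (-1) ^ N * Q.eval x) (hk : k ≤ N) :
    coeff k (numeratorSeries (N + 1) P) = coeff (N - k) (numeratorSeries (N + 1) Q) := by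
  have hvanish := P.sum_neg_one_pow_mul_choose_mul_eval_sub_eq_zero (Nat.lt_succ_of_le hP) k
  rw [show N + 1 + 1 = (k + 1) + (N - k + 1) by omega, sum_range_add] at hvanish
  rw [coeff_numeratorSeries, coeff_numeratorSeries, eq_neg_of_add_eq_zero_left hvanish,
    ← sum_range_reflect, ← sum_neg_distrib]
  have hsign (a b : ℕ) : -((-1 : R) ^ (a + 1) * (-1) ^ (a + b)) = (-1) ^ b := by
    linear_combination (-1 : R) ^ b * (Even.neg_one_pow ⟨a, rfl⟩ : (-1 : R) ^ (a + a) = 1)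
  refine sum_congr rfl fun x hx => ?_
  have hx : x ≤ N - k := Nat.lt_succ_iff.mp (mem_range.mp hx)
  obtain ⟨e, he⟩ : ∃ e, N - k - x = e := ⟨_, rfl⟩
  have hN : N + 1 = k + 1 + e + x := by omega
  rw [show N - k + 1 - 1 - x = e by omega, Nat.choose_symm_of_eq_add hN,
    show (k : R) - ↑(k + 1 + e) = -1 - ↑e by push_cast; ring, hPQ, ← Nat.cast_sub hx, he,
    show N = k + e + x by omega, ← hsign (k + e) x]
  ring

theorem coe_reflect_trunc_numeratorSeries {N : ℕ} {P Q : Polynomial R}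
    (hP : P.natDegree ≤ N) (hQ : Q.natDegree ≤ N)
    (hPQ : ∀ x, P.eval (-1 - x) = (-1) ^ N * Q.eval x) :
    (Polynomial.reflect N (trunc (N + 1) (numeratorSeries (N + 1) P)) : PowerSeries R) =
      numeratorSeries (N + 1) Q := by
  ext n
  rw [Polynomial.coeff_coe, Polynomial.coeff_reflect, coeff_trunc]
  by_cases hn : n ≤ N
  · rw [Polynomial.revAt_le hn, if_pos (by omega),
      coeff_numeratorSeries_eq_coeff_sub hP hPQ (Nat.sub_le N n), Nat.sub_sub_self hn]
  · rw [Polynomial.revAt_eq_self_of_lt (by omega), if_neg (by omega),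
      coeff_numeratorSeries_eq_zero (Nat.lt_succ_of_le hQ) (by omega)]

end NumeratorSeries

section

open Polynomial

theorem Apoly_eq_numeratorSeries (i j : ℕ) :
    Apoly i j = numeratorSeries (i + 2) (X ^ (j + 1) * (X + 1) ^ (i - j)) := by
  simp [Apoly, numeratorSeries]

theorem natDegree_X_pow_mul_X_add_one_pow_le {R : Type*} [Semiring R] {i j : ℕ} (hj : j ≤ i) :
    (X ^ (j + 1) * (X + 1) ^ (i - j) : R[X]).natDegree ≤ i + 1 := by
  compute_degree
  omega

theorem eval_neg_one_sub_X_pow_mul_X_add_one_pow {R : Type*} [CommRing R] {i j : ℕ}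
    (hj : j + 1 ≤ i) (x : R) :
    (X ^ (j + 1) * (X + 1) ^ (i - j) : R[X]).eval (-1 - x) =
      (-1) ^ (i + 1) * (X ^ (i - 1 - j + 1) * (X + 1) ^ (i - (i - 1 - j)) : R[X]).eval x := by
  rw [show i - 1 - j + 1 = i - j by omega, show i - (i - 1 - j) = j + 1 by omega,
    show i + 1 = (j + 1) + (i - j) by omega]
  simp only [eval_mul, eval_pow, eval_X, eval_add, eval_one]
  rw [show -1 - x = -(x + 1) by ring, show -(x + 1) + 1 = -x by ring, neg_pow, neg_pow, pow_add]
  ring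

end

/-- For `0 ≤ j ≤ i-1`, the polynomial `A(i,j,t)` satisfies the reciprocity
`t^{i+1} A(i,j,1/t) = A(i,i-1-j,t)`. -/
theorem A_reciprocity (i j : ℕ) (hij : j + 1 ≤ i) :
    ∃ p : Polynomial ℤ, (p : PowerSeries ℤ) = Apoly i j ∧
      ((Polynomial.reflect (i + 1) p : Polynomial ℤ) : PowerSeries ℤ)
        = Apoly i (i - 1 - j) := by
  refine ⟨PowerSeries.trunc (i + 2) (Apoly i j), ?_, ?_⟩
  · rw [Apoly_eq_numeratorSeries]
    exact coe_trunc_numeratorSeries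
      (Nat.lt_succ_of_le (natDegree_X_pow_mul_X_add_one_pow_le (by omega)))
  · rw [Apoly_eq_numeratorSeries, Apoly_eq_numeratorSeries]
    exact coe_reflect_trunc_numeratorSeries (natDegree_X_pow_mul_X_add_one_pow_le (by omega))
      (natDegree_X_pow_mul_X_add_one_pow_le (by omega))
      (eval_neg_one_sub_X_pow_mul_X_add_one_pow hij)
end

section
/- For 1 ≤ i ≤ (n+1)/2, the polynomial identity 2·δ(Δ^i × ℓ^{n+1-2i}, t) − δ(Δ^{i-1} × ℓ^{n+3-2i}, t) = (1−t)·δ(Δ^{i-1} × ℓ^{n-2(i-1)}, t) holds; consequently δ_j(Δ^{i-1} × ℓ^{n+3-2i}) ≤ 2δ_j(Δ^i × ℓ^{n+1-2i}) for 0 ≤ j ≤ ⌊(n-1)/2⌋ and the reverse inequality holds for ⌊(n-1)/2⌋+1 ≤ j ≤ n-1. -/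
/-!
Coefficientwise `2 · (m+1)(m+2)/2 - (m+1)² = m + 1`, which gives the identity. Comparing
coefficients in it, `2 δ_j(Δ^i × ℓ^{n+1-2i}) - δ_j(Δ^{i-1} × ℓ^{n+3-2i}) = c_j - c_{j-1}` for
`c = δ(Δ^{i-1} × ℓ^{n+2-2i})`, so the inequalities say that `c` is unimodal with peak at
`⌊(n-1)/2⌋`.

Multiplying a polytope of dimension `N` by `ℓ` acts on δ-vectors by
`c_j ↦ (j + p) c_j + (q - j) c_{j-1}` with `p = 1`, `q = N + 1`, and multiplying by `Δ` acts, up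
to a factor `2`, as the composite of two such maps with `p = 2` and `p = 1`. When
`D + p + 1 ≤ q ≤ D + p + 2`, such a map sends an alternatingly increasing sequence
`c_0 ≤ c_D ≤ c_1 ≤ c_{D-1} ≤ ⋯` to one with `D + 1` in place of `D`, and alternatingly increasing
sequences are unimodal with the required peak. Starting from `δ(ℓ) = δ(Δ) = 1` this reaches every
`Δ^a × ℓ^b`; for cubes the middle index also needs the symmetry of the Eulerian numbers.
-/

/-- `δ(Δ^a × ℓ^b, t) = (1-t)^{2a+b+1} ∑_{m≥0} ((m+1)(m+2)/2)^a (m+1)^b t^m`,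
the δ-polynomial of `Δ^a × ℓ^b` where `Δ` is the standard 2-simplex and `ℓ`
the unit segment. -/
noncomputable def deltaSC (a b : ℕ) : PowerSeries ℤ :=
  (1 - PowerSeries.X) ^ (2 * a + b + 1) *
    PowerSeries.mk (fun m : ℕ =>
      ((((m : ℤ) + 1) * ((m : ℤ) + 2) / 2) ^ a * ((m : ℤ) + 1) ^ b : ℤ))

open PowerSeries

section coeffZ

variable {R : Type*} [CommRing R]

-- Coefficients indexed by `ℤ` and zero at negative indices, so that `c (j - 1)` involves no
-- truncated subtraction.
noncomputable def coeffZ (φ : R⟦X⟧) : ℤ → R := (HahnSeries.ofPowerSeries ℤ R φ).coeff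

theorem coeffZ_natCast (φ : R⟦X⟧) (n : ℕ) : coeffZ φ n = coeff n φ :=
  HahnSeries.ofPowerSeries_apply_coeff φ n

theorem coeffZ_of_neg (φ : R⟦X⟧) {j : ℤ} (hj : j < 0) : coeffZ φ j = 0 := by
  simp [coeffZ, PowerSeries.coeff_coe, hj]

theorem coeffZ_add (φ ψ : R⟦X⟧) (j : ℤ) : coeffZ (φ + ψ) j = coeffZ φ j + coeffZ ψ j := by
  simp [coeffZ]

theorem coeffZ_sub (φ ψ : R⟦X⟧) (j : ℤ) : coeffZ (φ - ψ) j = coeffZ φ j - coeffZ ψ j := by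
  simp [coeffZ]

theorem coeffZ_C_mul (r : R) (φ : R⟦X⟧) (j : ℤ) : coeffZ (C r * φ) j = r * coeffZ φ j := by
  rw [coeffZ, map_mul, HahnSeries.ofPowerSeries_C, HahnSeries.C_mul_eq_smul]
  rfl

theorem coeffZ_X_mul (φ : R⟦X⟧) (j : ℤ) : coeffZ (X * φ) j = coeffZ φ (j - 1) := by
  simp [coeffZ, HahnSeries.coeff_single_mul]

theorem coeffZ_one (j : ℤ) : coeffZ (1 : R⟦X⟧) j = if j = 0 then 1 else 0 := by
  simp [coeffZ, HahnSeries.coeff_one]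

theorem coeffZ_derivative (φ : R⟦X⟧) (j : ℤ) :
    coeffZ (d⁄dX R φ) j = (j + 1) * coeffZ φ (j + 1) := by
  rcases lt_or_ge j 0 with hj | hj
  · rcases (show j = -1 ∨ j + 1 < 0 by omega) with rfl | hj'
    · simp [coeffZ_of_neg _ hj]
    · rw [coeffZ_of_neg _ hj, coeffZ_of_neg _ hj', mul_zero]
  · lift j to ℕ using hj
    rw [coeffZ_natCast, coeff_derivative, ← Nat.cast_succ (R := ℤ), coeffZ_natCast]
    push_cast
    ring

end coeffZ

def segmentStep (p q : ℤ) (c : ℤ → ℤ) (j : ℤ) : ℤ := (j + p) * c j + (q - j) * c (j - 1)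

noncomputable def segmentOp (p q : ℤ) (φ : ℤ⟦X⟧) : ℤ⟦X⟧ :=
  (C p + C (q - 1) * X) * φ + X * (1 - X) * d⁄dX ℤ φ

theorem coeffZ_segmentOp (p q : ℤ) (φ : ℤ⟦X⟧) :
    coeffZ (segmentOp p q φ) = segmentStep p q (coeffZ φ) := by
  funext j
  rw [segmentOp, show ∀ ψ : ℤ⟦X⟧, X * (1 - X) * ψ = X * ψ - X * (X * ψ) by intro; ring,
    add_mul, mul_assoc]
  simp only [coeffZ_add, coeffZ_sub, coeffZ_C_mul, coeffZ_X_mul, coeffZ_derivative, segmentStep,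
    sub_add_cancel, Int.cast_id]
  ring

theorem segmentOp_two_eq_add (q : ℤ) (φ : ℤ⟦X⟧) :
    segmentOp 2 q φ = segmentOp 1 (q + 1) φ + (1 - X) * φ := by
  simp only [segmentOp, map_add, map_sub, map_one, show (2 : ℤ) = 1 + 1 from rfl]
  ring

theorem segmentOp_apply_one (p q : ℤ) : segmentOp p q 1 = C p + C (q - 1) * X := by
  simp [segmentOp]

theorem segmentStep_two_segmentStep_one (q : ℤ) (c : ℤ → ℤ) :
    segmentStep 2 q (segmentStep 1 q c) = segmentStep 1 q (segmentStep 2 q c) := by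
  funext j
  simp only [segmentStep]
  ring

theorem derivative_one_sub_X_pow (n : ℕ) :
    d⁄dX ℤ ((1 - X : ℤ⟦X⟧) ^ (n + 1)) = -((n : ℤ⟦X⟧) + 1) * (1 - X) ^ n := by
  rw [Derivation.leibniz_pow, map_sub, Derivation.map_one_eq_zero, derivative_X,
    Nat.add_sub_cancel, smul_eq_mul, nsmul_eq_mul]
  push_cast
  ring

theorem mk_mul_natCast_add_one (f : ℕ → ℤ) :
    mk (fun m => f m * ((m : ℤ) + 1)) = mk f + X * d⁄dX ℤ (mk f) := by
  ext (_ | n)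
  · simp
  · rw [map_add, coeff_succ_X_mul, coeff_derivative]
    simp only [coeff_mk]
    push_cast
    ring

theorem segmentOp_one_sub_X_pow_mul (N : ℕ) (G : ℤ⟦X⟧) :
    segmentOp 1 (N + 1) ((1 - X) ^ (N + 1) * G) = (1 - X) ^ (N + 2) * (G + X * d⁄dX ℤ G) := by
  rw [segmentOp, Derivation.leibniz, derivative_one_sub_X_pow, smul_eq_mul, smul_eq_mul]
  simp only [add_sub_cancel_right, map_one, map_natCast, pow_succ]
  ring

structure AlternatinglyIncreasing (D : ℤ) (c : ℤ → ℤ) : Prop where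
  nonneg : ∀ j, 0 ≤ c j
  eq_zero_of_neg : ∀ j < 0, c j = 0
  eq_zero_of_gt : ∀ j, D < j → c j = 0
  le_reflect : ∀ j, 2 * j ≤ D → c j ≤ c (D - j)
  reflect_le : ∀ j, 2 * j < D → c (D - j) ≤ c (j + 1)

namespace AlternatinglyIncreasing

variable {D : ℤ} {c : ℤ → ℤ}

theorem pred_le (hc : AlternatinglyIncreasing D c) {j : ℤ} (hj : 2 * j ≤ D + 1) :
    c (j - 1) ≤ c j :=
  calc c (j - 1) ≤ c (D - (j - 1)) := hc.le_reflect _ (by omega)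
    _ ≤ c (j - 1 + 1) := hc.reflect_le _ (by omega)
    _ = c j := by rw [sub_add_cancel]

theorem le_pred (hc : AlternatinglyIncreasing D c) {j : ℤ} (hj : D + 2 ≤ 2 * j) :
    c j ≤ c (j - 1) :=
  calc c j = c (D - (D - j)) := by rw [sub_sub_cancel]
    _ ≤ c (D - j + 1) := hc.reflect_le _ (by omega)
    _ ≤ c (D - (D - j + 1)) := hc.le_reflect _ (by omega)
    _ = c (j - 1) := by congr 1; ring

theorem le_pred_of_symm (hc : AlternatinglyIncreasing D c) (hsymm : ∀ j, c (D - j) = c j)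
    {j : ℤ} (hj : D + 1 ≤ 2 * j) : c j ≤ c (j - 1) := by
  rw [← hsymm j, ← hsymm (j - 1), show D - (j - 1) = D - j + 1 by ring]
  simpa using hc.pred_le (j := D - j + 1) (by omega)

theorem pred_le_reflect (hc : AlternatinglyIncreasing D c) {j : ℤ} (hj : 2 * j ≤ D) :
    c (j - 1) ≤ c (D - j) :=
  (hc.pred_le (by omega)).trans (hc.le_reflect j hj)

theorem of_mul {k : ℤ} (hk : 0 < k) (h : AlternatinglyIncreasing D fun j => k * c j) :
    AlternatinglyIncreasing D c where
  nonneg j := (mul_nonneg_iff_of_pos_left hk).mp (h.nonneg j)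
  eq_zero_of_neg j hj := (mul_eq_zero.mp (h.eq_zero_of_neg j hj)).resolve_left hk.ne'
  eq_zero_of_gt j hj := (mul_eq_zero.mp (h.eq_zero_of_gt j hj)).resolve_left hk.ne'
  le_reflect j hj := le_of_mul_le_mul_left (h.le_reflect j hj) hk
  reflect_le j hj := le_of_mul_le_mul_left (h.reflect_le j hj) hk

end AlternatinglyIncreasing

section segmentStep

variable {D p q : ℤ} {c : ℤ → ℤ}

theorem segmentStep_eq_zero (hc : AlternatinglyIncreasing D c) {j : ℤ}
    (hj : j < 0 ∨ D + 1 < j) : segmentStep p q c j = 0 := by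
  rcases hj with hj | hj
  · simp [segmentStep, hc.eq_zero_of_neg j hj, hc.eq_zero_of_neg (j - 1) (by omega)]
  · simp [segmentStep, hc.eq_zero_of_gt j (by omega), hc.eq_zero_of_gt (j - 1) (by omega)]

theorem segmentStep_nonneg (hc : AlternatinglyIncreasing D c) (hp : 0 ≤ p) (hq : D + 1 ≤ q)
    (j : ℤ) : 0 ≤ segmentStep p q c j := by
  by_cases hj : j < 0 ∨ D + 1 < j
  · exact (segmentStep_eq_zero hc hj).ge
  · exact add_nonneg (mul_nonneg (by omega) (hc.nonneg _)) (mul_nonneg (by omega) (hc.nonneg _))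

theorem segmentStep_le_reflect (hc : AlternatinglyIncreasing D c) (hp : 0 ≤ p)
    (hq : D + p + 1 ≤ q) {j : ℤ} (hj : 2 * j ≤ D + 1) :
    segmentStep p q c j ≤ segmentStep p q c (D + 1 - j) := by
  rcases lt_or_ge j 0 with hj0 | hj0
  · rw [segmentStep_eq_zero hc (Or.inl hj0), segmentStep_eq_zero hc (Or.inr (by omega))]
  rcases eq_or_lt_of_le hj with hmid | hj
  · rw [show D + 1 - j = j by omega]
  have h₁ := mul_le_mul_of_nonneg_left (hc.le_reflect j (by omega)) (show 0 ≤ j + p by omega)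
  have h₂ := mul_le_mul_of_nonneg_left (hc.le_reflect (j - 1) (by omega))
    (show 0 ≤ D + 1 + p - j by omega)
  have h₃ := mul_le_mul_of_nonneg_left (hc.pred_le_reflect (show 2 * j ≤ D by omega))
    (show 0 ≤ q - D - p - 1 by omega)
  rw [show D - (j - 1) = D + 1 - j by ring] at h₂
  rw [segmentStep, segmentStep, show D + 1 - j - 1 = D - j by ring]
  linarith

theorem segmentStep_reflect_le (hc : AlternatinglyIncreasing D c) (hp : 0 ≤ p)
    (hq₁ : D + p + 1 ≤ q) (hq₂ : q ≤ D + p + 2) {j : ℤ} (hj : 2 * j < D + 1) :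
    segmentStep p q c (D + 1 - j) ≤ segmentStep p q c (j + 1) := by
  rcases lt_or_ge j 0 with hj0 | hj0
  · rw [segmentStep_eq_zero hc (Or.inr (by omega))]
    exact segmentStep_nonneg hc hp (by omega) _
  rcases eq_or_lt_of_le (show 2 * j ≤ D by omega) with hmid | hj
  · rw [show D + 1 - j = j + 1 by omega]
  have h₁ := mul_le_mul_of_nonneg_left (hc.reflect_le j hj) (show 0 ≤ j + q - D - 1 by omega)
  have h₂ := mul_le_mul_of_nonneg_left (hc.reflect_le (j - 1) (by omega))
    (show 0 ≤ D + 1 + p - j by omega)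
  have h₃ := mul_le_mul_of_nonneg_left (hc.pred_le (j := j + 1) (by omega))
    (show 0 ≤ D + p + 2 - q by omega)
  rw [show D - (j - 1) = D + 1 - j by ring, sub_add_cancel] at h₂
  rw [add_sub_cancel_right] at h₃
  rw [segmentStep, segmentStep, show D + 1 - j - 1 = D - j by ring, add_sub_cancel_right]
  linarith

theorem AlternatinglyIncreasing.segmentStep (hc : AlternatinglyIncreasing D c) (hp : 0 ≤ p)
    (hq₁ : D + p + 1 ≤ q) (hq₂ : q ≤ D + p + 2) :
    AlternatinglyIncreasing (D + 1) (segmentStep p q c) where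
  nonneg := segmentStep_nonneg hc hp (by omega)
  eq_zero_of_neg _ hj := segmentStep_eq_zero hc (Or.inl hj)
  eq_zero_of_gt _ hj := segmentStep_eq_zero hc (Or.inr hj)
  le_reflect _ hj := segmentStep_le_reflect hc hp hq₁ hj
  reflect_le _ hj := segmentStep_reflect_le hc hp hq₁ hq₂ hj

theorem segmentStep_symm (hsymm : ∀ j, c (D - j) = c j) (j : ℤ) :
    segmentStep p (D + p + 1) c (D + 1 - j) = segmentStep p (D + p + 1) c j := by
  rw [segmentStep, segmentStep, show D + 1 - j - 1 = D - j by ring, hsymm j,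
    show D + 1 - j = D - (j - 1) by ring, hsymm (j - 1)]
  ring

end segmentStep

def latticeCount (a b m : ℕ) : ℤ := (((m : ℤ) + 1) * ((m : ℤ) + 2) / 2) ^ a * ((m : ℤ) + 1) ^ b

theorem deltaSC_eq (a b : ℕ) :
    deltaSC a b = (1 - X) ^ (2 * a + b + 1) * mk (latticeCount a b) :=
  rfl

theorem two_mul_latticeCount_succ_left (a b m : ℕ) :
    2 * latticeCount (a + 1) b m = latticeCount a (b + 1) m * ((m : ℤ) + 2) := by
  have h := Int.two_mul_ediv_two_of_even (Int.even_mul_succ_self ((m : ℤ) + 1))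
  rw [add_assoc, one_add_one_eq_two] at h
  rw [latticeCount, latticeCount, pow_succ, pow_succ]
  linear_combination ((((m : ℤ) + 1) * ((m : ℤ) + 2) / 2) ^ a * ((m : ℤ) + 1) ^ b) * h

theorem latticeCount_succ_right (a b m : ℕ) :
    latticeCount a (b + 1) m = latticeCount a b m * ((m : ℤ) + 1) := by
  rw [latticeCount, latticeCount, pow_succ]
  ring

theorem two_mul_deltaSC_succ_sub (a b : ℕ) :
    2 * deltaSC (a + 1) b - deltaSC a (b + 2) = (1 - X) * deltaSC a (b + 1) := by
  have hmk : 2 * mk (latticeCount (a + 1) b) - mk (latticeCount a (b + 2))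
      = mk (latticeCount a (b + 1)) := by
    ext m
    rw [map_sub, ← map_ofNat C, coeff_C_mul]
    simp only [coeff_mk, two_mul_latticeCount_succ_left, latticeCount_succ_right]
    ring
  simp only [deltaSC_eq, ← hmk,
    show 2 * (a + 1) + b + 1 = 2 * a + (b + 1) + 1 + 1 by ring,
    show 2 * a + (b + 2) + 1 = 2 * a + (b + 1) + 1 + 1 by ring]
  ring

theorem deltaSC_succ_right (a b : ℕ) :
    deltaSC a (b + 1) = segmentOp 1 (2 * a + b + 1) (deltaSC a b) := by
  rw [deltaSC_eq, deltaSC_eq, show 2 * a + (b + 1) + 1 = 2 * a + b + 2 by ring,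
    funext (latticeCount_succ_right a b), mk_mul_natCast_add_one]
  exact_mod_cast (segmentOp_one_sub_X_pow_mul (2 * a + b) _).symm

theorem two_mul_deltaSC_succ_left (a b : ℕ) :
    2 * deltaSC (a + 1) b
      = segmentOp 2 (2 * a + b + 1) (segmentOp 1 (2 * a + b + 1) (deltaSC a b)) := by
  have hb : deltaSC a (b + 2) = segmentOp 1 (2 * a + b + 1 + 1) (deltaSC a (b + 1)) := by
    rw [deltaSC_succ_right a (b + 1), Nat.cast_succ, ← add_assoc]
  rw [segmentOp_two_eq_add, ← deltaSC_succ_right, ← hb]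
  linear_combination two_mul_deltaSC_succ_sub a b

theorem two_mul_coeffZ_deltaSC_succ_left (a b : ℕ) (j : ℤ) :
    2 * coeffZ (deltaSC (a + 1) b) j
      = segmentStep 1 (2 * a + b + 1) (segmentStep 2 (2 * a + b + 1) (coeffZ (deltaSC a b))) j := by
  rw [← segmentStep_two_segmentStep_one, ← coeffZ_segmentOp, ← coeffZ_segmentOp,
    ← two_mul_deltaSC_succ_left, ← map_ofNat C, coeffZ_C_mul]

theorem deltaSC_zero_zero : deltaSC 0 0 = 1 := by
  have h : latticeCount 0 0 = 1 := by
    funext m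
    simp [latticeCount]
  rw [deltaSC_eq, h, pow_one, mul_comm, mk_one_mul_one_sub_eq_one]

theorem deltaSC_one_zero : deltaSC 1 0 = 1 := by
  have h := two_mul_deltaSC_succ_left 0 0
  simp only [deltaSC_zero_zero, segmentOp_apply_one, CharP.cast_eq_zero, mul_zero, add_zero,
    sub_self, map_zero, zero_mul, map_one, Int.reduceAdd, map_ofNat] at h
  have h2 : (2 : ℤ⟦X⟧) ≠ 0 := by
    rw [← map_ofNat C, Ne, map_eq_zero_iff _ C_injective]
    exact two_ne_zero
  exact mul_left_cancel₀ h2 (h.trans (mul_one 2).symm)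

theorem alternatinglyIncreasing_coeffZ_one : AlternatinglyIncreasing 0 (coeffZ (1 : ℤ⟦X⟧)) where
  nonneg j := by rw [coeffZ_one]; split_ifs <;> norm_num
  eq_zero_of_neg j hj := by rw [coeffZ_one, if_neg hj.ne]
  eq_zero_of_gt j hj := by rw [coeffZ_one, if_neg hj.ne']
  le_reflect j hj := by simp only [coeffZ_one]; split_ifs <;> omega
  reflect_le j hj := by simp only [coeffZ_one]; split_ifs <;> omega

theorem alternatinglyIncreasing_coeffZ_deltaSC_zero (b : ℕ) :
    AlternatinglyIncreasing b (coeffZ (deltaSC 0 (b + 1))) ∧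
      ∀ j, coeffZ (deltaSC 0 (b + 1)) (b - j) = coeffZ (deltaSC 0 (b + 1)) j := by
  induction b with
  | zero =>
    rw [deltaSC_succ_right, deltaSC_zero_zero, segmentOp_apply_one]
    refine ⟨by simpa using alternatinglyIncreasing_coeffZ_one, fun j => ?_⟩
    simp [coeffZ_one]
  | succ b ih =>
    rw [deltaSC_succ_right, coeffZ_segmentOp, Nat.cast_zero, mul_zero, zero_add, Nat.cast_succ]
    exact ⟨ih.1.segmentStep zero_le_one le_rfl (by omega), segmentStep_symm ih.2⟩

theorem alternatinglyIncreasing_coeffZ_deltaSC_succ (a b : ℕ) :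
    AlternatinglyIncreasing (2 * a + b) (coeffZ (deltaSC (a + 1) b)) := by
  induction b with
  | zero =>
    induction a with
    | zero => simpa [deltaSC_one_zero] using alternatinglyIncreasing_coeffZ_one
    | succ a ih =>
      refine AlternatinglyIncreasing.of_mul two_pos ?_
      simp only [two_mul_coeffZ_deltaSC_succ_left]
      rw [show 2 * ((a + 1 : ℕ) : ℤ) + ((0 : ℕ) : ℤ) = 2 * a + (0 : ℕ) + 1 + 1 by push_cast; ring]
      exact (ih.segmentStep zero_le_two (by omega) (by omega)).segmentStep zero_le_one
        (by omega) (by omega)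
  | succ b ih =>
    rw [deltaSC_succ_right, coeffZ_segmentOp, Nat.cast_succ, ← add_assoc]
    exact ih.segmentStep zero_le_one (by omega) (by omega)

theorem coeffZ_deltaSC_pred_le (a b : ℕ) {j : ℤ} (hj : 2 * j ≤ 2 * a + b) :
    coeffZ (deltaSC a (b + 1)) (j - 1) ≤ coeffZ (deltaSC a (b + 1)) j := by
  cases a with
  | zero => exact (alternatinglyIncreasing_coeffZ_deltaSC_zero b).1.pred_le (by omega)
  | succ a => exact (alternatinglyIncreasing_coeffZ_deltaSC_succ a (b + 1)).pred_le (by omega)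

theorem coeffZ_deltaSC_le_pred (a b : ℕ) {j : ℤ} (hj : 2 * a + b < 2 * j) :
    coeffZ (deltaSC a (b + 1)) j ≤ coeffZ (deltaSC a (b + 1)) (j - 1) := by
  cases a with
  | zero =>
    obtain ⟨h, hsymm⟩ := alternatinglyIncreasing_coeffZ_deltaSC_zero b
    exact h.le_pred_of_symm hsymm (by omega)
  | succ a => exact (alternatinglyIncreasing_coeffZ_deltaSC_succ a (b + 1)).le_pred (by omega)

theorem coeff_two_mul_deltaSC_succ_sub (a b j : ℕ) :
    2 * coeff j (deltaSC (a + 1) b) - coeff j (deltaSC a (b + 2))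
      = coeffZ (deltaSC a (b + 1)) j - coeffZ (deltaSC a (b + 1)) (j - 1) := by
  rw [← coeffZ_natCast, ← coeffZ_natCast, ← coeffZ_C_mul, ← coeffZ_sub, map_ofNat,
    two_mul_deltaSC_succ_sub, sub_mul, one_mul, coeffZ_sub, coeffZ_X_mul]

/-- For `1 ≤ i ≤ (n+1)/2`:
`2 δ(Δ^i × ℓ^{n+1-2i}, t) − δ(Δ^{i-1} × ℓ^{n+3-2i}, t)
  = (1−t) δ(Δ^{i-1} × ℓ^{n-2(i-1)}, t)`;
consequently `δ_j(Δ^{i-1} × ℓ^{n+3-2i}) ≤ 2 δ_j(Δ^i × ℓ^{n+1-2i})` for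
`0 ≤ j ≤ ⌊(n-1)/2⌋` and the reverse inequality for `⌊(n-1)/2⌋+1 ≤ j ≤ n-1`. -/
theorem two_delta_difference (n i : ℕ) (hi : 1 ≤ i) (hin : 2 * i ≤ n + 1) :
    (2 * deltaSC i (n + 1 - 2 * i) - deltaSC (i - 1) (n + 3 - 2 * i)
        = (1 - PowerSeries.X) * deltaSC (i - 1) (n - 2 * (i - 1)))
    ∧ (∀ j, j ≤ (n - 1) / 2 →
        PowerSeries.coeff j (deltaSC (i - 1) (n + 3 - 2 * i))
          ≤ 2 * PowerSeries.coeff j (deltaSC i (n + 1 - 2 * i)))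
    ∧ (∀ j, (n - 1) / 2 + 1 ≤ j → j ≤ n - 1 →
        2 * PowerSeries.coeff j (deltaSC i (n + 1 - 2 * i))
          ≤ PowerSeries.coeff j (deltaSC (i - 1) (n + 3 - 2 * i))) := by
  obtain ⟨a, rfl⟩ : ∃ a, i = a + 1 := ⟨i - 1, by omega⟩
  obtain ⟨b, rfl⟩ : ∃ b, n = 2 * a + b + 1 := ⟨n - 2 * a - 1, by omega⟩
  rw [show 2 * a + b + 1 + 1 - 2 * (a + 1) = b by omega,
    show 2 * a + b + 1 + 3 - 2 * (a + 1) = b + 2 by omega, show a + 1 - 1 = a by omega,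
    show 2 * a + b + 1 - 2 * a = b + 1 by omega]
  refine ⟨two_mul_deltaSC_succ_sub a b, fun j hj => ?_, fun j hj _ => ?_⟩
  · have := coeffZ_deltaSC_pred_le a b (j := j) (by omega)
    linarith [coeff_two_mul_deltaSC_succ_sub a b j]
  · have := coeffZ_deltaSC_le_pred a b (j := j) (by omega)
    linarith [coeff_two_mul_deltaSC_succ_sub a b j]
end
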